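/- Let ε > 0 and define B⁻ in polar coordinates on the region {cos θ ≤ 0, r ≥ 1} by B̃⁻(r,θ) := e^{κ cos(θ)(r-1)/ε} for a fixed 0 < κ ≤ 1. Then for all r > 1 and cos θ < 0, the transformed operator satisfies L̃ B̃⁻ := -(ε/r²) B̃⁻_{θθ} - ε B̃⁻_{rr} + (cos θ - ε/r) B̃⁻_r - (sin θ / r) B̃⁻_θ ≥ (κ/ε) sin²(θ) (1 - κ + κ/r)(1 - 1/r) B̃⁻ ≥ 0. -/
import Mathlib


/-- partial derivative in the first (radial) variable -/
noncomputable def pdr (f : ℝ × ℝ → ℝ) (p : ℝ × ℝ) : ℝ := fderiv ℝ f p (1, 0)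
/-- partial derivative in the second (angular) variable -/
noncomputable def pdθ (f : ℝ × ℝ → ℝ) (p : ℝ × ℝ) : ℝ := fderiv ℝ f p (0, 1)

private lemma hEg (ε κ : ℝ) (p : ℝ × ℝ) :
    HasFDerivAt (fun p : ℝ × ℝ => Real.exp (κ * Real.cos p.2 * (p.1 - 1) / ε))
      (Real.exp (κ * Real.cos p.2 * (p.1 - 1) / ε) •
        (ε⁻¹ • ((κ * Real.cos p.2) • ContinuousLinearMap.fst ℝ ℝ ℝ +
          (p.1 - 1) • κ • (-Real.sin p.2) • ContinuousLinearMap.snd ℝ ℝ ℝ))) p := by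
  have hcos : HasFDerivAt (fun p : ℝ × ℝ => Real.cos p.2)
      ((-Real.sin p.2) • ContinuousLinearMap.snd ℝ ℝ ℝ) p :=
    (Real.hasDerivAt_cos p.2).comp_hasFDerivAt p hasFDerivAt_snd
  have hsub : HasFDerivAt (fun p : ℝ × ℝ => p.1 - 1)
      (ContinuousLinearMap.fst ℝ ℝ ℝ) p := hasFDerivAt_fst.sub_const 1
  have h5 := ((hcos.const_mul κ).mul hsub).mul_const ε⁻¹
  exact (Real.hasDerivAt_exp (κ * Real.cos p.2 * (p.1 - 1) / ε)).comp_hasFDerivAt p h5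

private lemma aux_pdr (ε κ : ℝ) :
    pdr (fun p : ℝ × ℝ => Real.exp (κ * Real.cos p.2 * (p.1 - 1) / ε)) =
      fun p : ℝ × ℝ => Real.exp (κ * Real.cos p.2 * (p.1 - 1) / ε) * (κ * Real.cos p.2 / ε) := by
  funext p
  rw [pdr, (hEg ε κ p).fderiv]
  simp; ring

private lemma aux_pdθ (ε κ : ℝ) :
    pdθ (fun p : ℝ × ℝ => Real.exp (κ * Real.cos p.2 * (p.1 - 1) / ε)) =
      fun p : ℝ × ℝ => Real.exp (κ * Real.cos p.2 * (p.1 - 1) / ε) *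
        (κ * -Real.sin p.2 * (p.1 - 1) / ε) := by
  funext p
  rw [pdθ, (hEg ε κ p).fderiv]
  simp; ring

private lemma aux_pdrr (ε κ : ℝ) (p : ℝ × ℝ) :
    pdr (pdr (fun p : ℝ × ℝ => Real.exp (κ * Real.cos p.2 * (p.1 - 1) / ε))) p =
      Real.exp (κ * Real.cos p.2 * (p.1 - 1) / ε) * (κ * Real.cos p.2 / ε) ^ 2 := by
  rw [aux_pdr]
  have hcos : HasFDerivAt (fun p : ℝ × ℝ => Real.cos p.2)
      ((-Real.sin p.2) • ContinuousLinearMap.snd ℝ ℝ ℝ) p :=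
    (Real.hasDerivAt_cos p.2).comp_hasFDerivAt p hasFDerivAt_snd
  have h : HasFDerivAt (fun p : ℝ × ℝ =>
      Real.exp (κ * Real.cos p.2 * (p.1 - 1) / ε) * (κ * Real.cos p.2 / ε)) _ p :=
    (hEg ε κ p).mul ((hcos.const_mul κ).mul_const ε⁻¹)
  rw [pdr, h.fderiv]
  simp; ring

private lemma aux_pdθθ (ε κ : ℝ) (p : ℝ × ℝ) :
    pdθ (pdθ (fun p : ℝ × ℝ => Real.exp (κ * Real.cos p.2 * (p.1 - 1) / ε))) p =
      Real.exp (κ * Real.cos p.2 * (p.1 - 1) / ε) *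
        ((κ * Real.sin p.2 * (p.1 - 1) / ε) ^ 2 - κ * Real.cos p.2 * (p.1 - 1) / ε) := by
  rw [aux_pdθ]
  have hsin := ((Real.hasDerivAt_sin p.2).comp_hasFDerivAt p
    (hasFDerivAt_snd : HasFDerivAt Prod.snd (ContinuousLinearMap.snd ℝ ℝ ℝ) p)).neg
  have hsub : HasFDerivAt (fun p : ℝ × ℝ => p.1 - 1)
      (ContinuousLinearMap.fst ℝ ℝ ℝ) p := hasFDerivAt_fst.sub_const 1
  have h : HasFDerivAt (fun p : ℝ × ℝ =>
      Real.exp (κ * Real.cos p.2 * (p.1 - 1) / ε) * (κ * -Real.sin p.2 * (p.1 - 1) / ε)) _ p :=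
    (hEg ε κ p).mul (((hsin.const_mul κ).mul hsub).mul_const ε⁻¹)
  rw [pdθ, h.fderiv]
  simp; ring

/-- The barrier `B̃⁻(r,θ) = e^{κ cos(θ)(r-1)/ε}` satisfies
`L̃ B̃⁻ ≥ (κ/ε) sin²θ (1-κ+κ/r)(1-1/r) B̃⁻ ≥ 0` for `r > 1`, `cos θ < 0`. -/
theorem stmt_6 (ε κ : ℝ) (hε : 0 < ε) (hκ0 : 0 < κ) (hκ1 : κ ≤ 1)
    (B : ℝ × ℝ → ℝ)
    (hB : B = fun p : ℝ × ℝ => Real.exp (κ * Real.cos p.2 * (p.1 - 1) / ε))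
    (r θ : ℝ) (hr : 1 < r) (hθ : Real.cos θ < 0) :
    (κ / ε) * (Real.sin θ) ^ 2 * (1 - κ + κ / r) * (1 - 1 / r) * B (r, θ) ≤
      -(ε / r ^ 2) * pdθ (pdθ B) (r, θ) - ε * pdr (pdr B) (r, θ) +
        (Real.cos θ - ε / r) * pdr B (r, θ) - (Real.sin θ / r) * pdθ B (r, θ) ∧
    0 ≤ (κ / ε) * (Real.sin θ) ^ 2 * (1 - κ + κ / r) * (1 - 1 / r) * B (r, θ) := by
  subst hB
  rw [aux_pdrr, aux_pdθθ, aux_pdr, aux_pdθ]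
  set E := Real.exp (κ * Real.cos (r, θ).2 * ((r, θ).1 - 1) / ε) with hE
  simp only at *
  have hEpos : 0 < E := Real.exp_pos _
  have hr0 : (0:ℝ) < r := by linarith
  have hfac : (0:ℝ) < 1 - κ + κ / r := by
    have h1 : 0 < κ / r := div_pos hκ0 hr0
    linarith
  have hfac2 : (0:ℝ) < 1 - 1 / r := by
    have : 1 / r < 1 := by rw [div_lt_one hr0]; linarith
    linarith
  constructor
  · have key : (-(ε / r ^ 2) * (E * ((κ * Real.sin θ * (r - 1) / ε) ^ 2 - κ * Real.cos θ * (r - 1) / ε)) -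
        ε * (E * (κ * Real.cos θ / ε) ^ 2) +
        (Real.cos θ - ε / r) * (E * (κ * Real.cos θ / ε)) -
        Real.sin θ / r * (E * (κ * -Real.sin θ * (r - 1) / ε))) -
        (κ / ε) * (Real.sin θ) ^ 2 * (1 - κ + κ / r) * (1 - 1 / r) * E =
        E * (κ * (1 - κ) * Real.cos θ ^ 2 / ε + κ * (-Real.cos θ) / r ^ 2) := by
      field_simp
      ring
    have p1 : (0:ℝ) ≤ κ * (1 - κ) * Real.cos θ ^ 2 / ε := by
      apply div_nonneg _ hε.le
      exact mul_nonneg (mul_nonneg hκ0.le (by linarith)) (sq_nonneg _)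
    have p2 : (0:ℝ) ≤ κ * (-Real.cos θ) / r ^ 2 := by
      apply div_nonneg _ (by positivity)
      exact mul_nonneg hκ0.le (by linarith)
    nlinarith [mul_nonneg hEpos.le (add_nonneg p1 p2)]
  · have e1 : (0:ℝ) ≤ κ / ε := by positivity
    exact mul_nonneg (mul_nonneg (mul_nonneg (mul_nonneg e1 (sq_nonneg _)) hfac.le) hfac2.le) hEpos.le
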